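/- Let p ≥ 2, let σ = (σ₁,…,σ_{p−1}) ∈ {+1,−1}^{p−1} with σ₁ = +1, and suppose t₀ ∈ (0,2] is a regular point of the root branch φ_σ satisfying t₀ = φ_σ(t₀). Then the critical point 0 is a superstable cycle of q_{t₀} of prime period p: q_{t₀}^p(0) = 0, and for 1 ≤ k ≤ p−1 one has q_{t₀}^k(0) ≠ 0; more precisely q_{t₀}(0) = t₀ = φ_σ(t₀) and q_{t₀}^k(0) = φ_{(−σ_k, σ_{k+1},…,σ_{p−1})}(t₀) for 2 ≤ k ≤ p−1, so the sign of q_{t₀}^k(0) is −σ_k for 2 ≤ k ≤ p−1. -/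

import Mathlib

/-- The quadratic map `q_t(x) = t - x^2`. -/
noncomputable def q (t x : ℝ) : ℝ := t - x ^ 2

/-- The root branch `φ_σ(t)` associated with a sign sequence `σ = (σ₁, …, σ_n)`
(encoded as a list of reals, each `±1`, with head `σ₁`), defined recursively by
`φ_{[]}(t) = 0` and `φ_{σ₁ :: ρ}(t) = σ₁ · √(t + φ_ρ(t))`; thus
`φ_σ(t) = σ₁√(t + σ₂√(t + ⋯ + σ_n√t))`. -/
noncomputable def phi : List ℝ → ℝ → ℝ
  | [], _ => 0
  | s :: rest, t => s * Real.sqrt (t + phi rest t)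

/-- `σ` is a sequence of signs `±1`. -/
def IsSigns (σ : List ℝ) : Prop := ∀ s ∈ σ, s = 1 ∨ s = -1

/-- `t` belongs to the definition domain of `φ_σ`: `t ≥ 0` and every radicand
`t + φ_ρ(t)`, for `ρ` a proper suffix of `σ`, is nonnegative. -/
def InDom (σ : List ℝ) (t : ℝ) : Prop :=
  0 ≤ t ∧ ∀ ρ : List ℝ, ρ <:+ σ → ρ ≠ σ → 0 ≤ t + phi ρ t

/-- `t` is a regular point of `φ_σ`: `t` is in the definition domain and
`φ_ρ(t) ≠ 0` for every nonempty suffix `ρ` of `σ` (including `σ` itself). -/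
def IsRegularPt (σ : List ℝ) (t : ℝ) : Prop :=
  InDom σ t ∧ ∀ ρ : List ℝ, ρ <:+ σ → ρ ≠ [] → phi ρ t ≠ 0

/-!
Every `φ_ρ` with `ρ = s :: ρ'` satisfies `φ_ρ(t)² = t + φ_{ρ'}(t)`, so `q_t` sends `±φ_ρ(t)` to
`-φ_{ρ'}(t)`: iterating `q_t` peels the signs off `σ` one at a time. Starting from
`q_{t₀}(0) = t₀ = φ_σ(t₀)`, the orbit of `0` therefore runs through `-φ_{σ.drop k}(t₀)` and reaches
`-φ_{[]}(t₀) = 0` after `p` steps; regularity keeps all intermediate values away from `0`.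
-/

lemma q_neg (t x : ℝ) : q t (-x) = q t x := by
  rw [q, q, neg_sq]

lemma phi_cons_sq {s t : ℝ} {ρ : List ℝ} (hs : s = 1 ∨ s = -1) (hr : 0 ≤ t + phi ρ t) :
    phi (s :: ρ) t ^ 2 = t + phi ρ t := by
  have hs2 : s ^ 2 = 1 := by rcases hs with rfl | rfl <;> norm_num
  rw [phi, mul_pow, hs2, Real.sq_sqrt hr, one_mul]

lemma q_phi_cons {s t : ℝ} {ρ : List ℝ} (hs : s = 1 ∨ s = -1) (hr : 0 ≤ t + phi ρ t) :
    q t (phi (s :: ρ) t) = -phi ρ t := by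
  rw [q, phi_cons_sq hs hr]
  ring

lemma neg_phi_cons (s t : ℝ) (ρ : List ℝ) : -phi (s :: ρ) t = phi (-s :: ρ) t := by
  simp only [phi, neg_mul]

lemma sign_phi_cons {s t : ℝ} {ρ : List ℝ} (hs : s = 1 ∨ s = -1) (h : phi (s :: ρ) t ≠ 0) :
    Real.sign (phi (s :: ρ) t) = s := by
  have hsqrt : 0 < Real.sqrt (t + phi ρ t) :=
    (Real.sqrt_nonneg _).lt_of_ne' fun hz ↦ h (by rw [phi, hz, mul_zero])
  rcases hs with rfl | rfl
  · rw [phi, one_mul, Real.sign_of_pos hsqrt]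
  · rw [phi, neg_one_mul, Real.sign_of_neg (neg_neg_of_pos hsqrt)]

section Orbit

variable {σ : List ℝ} {t : ℝ}

lemma InDom.radicand_nonneg (h : InDom σ t) {j : ℕ} (hj : 0 < j) (hjσ : j ≤ σ.length) :
    0 ≤ t + phi (σ.drop j) t := by
  refine h.2 _ (σ.drop_suffix j) fun hdrop ↦ ?_
  have := congrArg List.length hdrop
  rw [List.length_drop] at this
  omega

lemma IsRegularPt.phi_drop_ne_zero (h : IsRegularPt σ t) {j : ℕ} (hj : j < σ.length) :
    phi (σ.drop j) t ≠ 0 :=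
  h.2 _ (σ.drop_suffix j) (by simp only [ne_eq, List.drop_eq_nil_iff]; omega)

lemma IsRegularPt.sign_phi_drop (h : IsRegularPt σ t) (hσ : IsSigns σ) {j : ℕ}
    (hj : j < σ.length) : Real.sign (phi (σ.drop j) t) = σ.getD j 0 := by
  have hne := h.phi_drop_ne_zero hj
  rw [List.drop_eq_getElem_cons hj] at hne ⊢
  rw [σ.getD_eq_getElem 0 hj]
  exact sign_phi_cons (hσ _ (List.getElem_mem hj)) hne

lemma q_phi_drop (hσ : IsSigns σ) (hdom : InDom σ t) {j : ℕ} (hj : j < σ.length) :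
    q t (phi (σ.drop j) t) = -phi (σ.drop (j + 1)) t := by
  rw [List.drop_eq_getElem_cons hj]
  exact q_phi_cons (hσ _ (List.getElem_mem hj)) (hdom.radicand_nonneg j.succ_pos hj)

lemma iterate_q_phi (hσ : IsSigns σ) (hdom : InDom σ t) {k : ℕ} (hk : 1 ≤ k)
    (hkσ : k ≤ σ.length) : (q t)^[k] (phi σ t) = -phi (σ.drop k) t := by
  induction k, hk using Nat.le_induction with
  | base => simpa using q_phi_drop hσ hdom (j := 0) (by omega)
  | succ k hk ih =>
    rw [Function.iterate_succ_apply', ih (by omega), q_neg, q_phi_drop hσ hdom (by omega)]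

end Orbit

theorem root_branch_fixed_point_gives_superstable_cycle_general
    (p : ℕ) (hp : 2 ≤ p) (σ : List ℝ) (hσ : IsSigns σ)
    (hlen : σ.length = p - 1)
    (t₀ : ℝ)
    (hreg : IsRegularPt σ t₀) (hfix : t₀ = phi σ t₀) :
    (q t₀)^[p] 0 = 0 ∧
    (∀ k, 1 ≤ k → k ≤ p - 1 → (q t₀)^[k] 0 ≠ 0) ∧
    (q t₀)^[1] 0 = t₀ ∧
    (∀ k, 2 ≤ k → k ≤ p - 1 →
      (q t₀)^[k] 0 = phi ((-(σ.getD (k - 1) 0)) :: σ.drop k) t₀ ∧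
      Real.sign ((q t₀)^[k] 0) = -(σ.getD (k - 1) 0)) := by
  have hq0 : q t₀ 0 = t₀ := by rw [q, zero_pow two_ne_zero, sub_zero]
  have hq1 : (q t₀)^[1] 0 = t₀ := hq0
  have orbit (j : ℕ) (hj : 1 ≤ j) (hjσ : j ≤ σ.length) :
      (q t₀)^[j + 1] 0 = -phi (σ.drop j) t₀ := by
    rw [Function.iterate_succ_apply, hq0]
    simpa only [← hfix] using iterate_q_phi hσ hreg.1 hj hjσ
  refine ⟨?_, ?_, hq1, ?_⟩
  · obtain rfl : p = σ.length + 1 := by omega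
    rw [orbit _ (by omega) le_rfl, List.drop_length, phi, neg_zero]
  · intro k hk hkp
    obtain ⟨j, rfl⟩ : ∃ j, k = j + 1 := ⟨k - 1, by omega⟩
    rcases Nat.eq_zero_or_pos j with rfl | hj
    · rw [hq1, hfix, ← List.drop_zero (l := σ)]
      exact hreg.phi_drop_ne_zero (by omega)
    · rw [orbit j hj (by omega), neg_ne_zero]
      exact hreg.phi_drop_ne_zero (by omega)
  · intro k hk hkp
    obtain ⟨j, rfl⟩ : ∃ j, k = j + 1 := ⟨k - 1, by omega⟩
    have hjσ : j < σ.length := by omega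
    rw [Nat.add_sub_cancel, orbit j (by omega) hjσ.le, Real.sign_neg,
      hreg.sign_phi_drop hσ hjσ, List.drop_eq_getElem_cons hjσ, σ.getD_eq_getElem 0 hjσ,
      neg_phi_cons]
    exact ⟨rfl, rfl⟩

/-- Conversely, if `t₀ ∈ (0,2]` is a regular point of a root branch `φ_σ` with
`σ = (σ₁,…,σ_{p-1})`, `σ₁ = +1`, satisfying the fixed-point equation
`t₀ = φ_σ(t₀)`, then `0` is a superstable cycle of `q_{t₀}` of prime period
`p`: `q_{t₀}^p(0) = 0`, `q_{t₀}^k(0) ≠ 0` for `1 ≤ k ≤ p-1`; more precisely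
`q_{t₀}(0) = t₀ = φ_σ(t₀)` and, for `2 ≤ k ≤ p-1`,
`q_{t₀}^k(0) = φ_{(-σ_k, σ_{k+1},…,σ_{p-1})}(t₀)`, whose sign is `-σ_k`. -/
theorem root_branch_fixed_point_gives_superstable_cycle
    (p : ℕ) (hp : 2 ≤ p) (σ : List ℝ) (hσ : IsSigns σ)
    (hlen : σ.length = p - 1) (hhead : σ.getD 0 0 = 1)
    (t₀ : ℝ) (ht : t₀ ∈ Set.Ioc (0 : ℝ) 2)
    (hreg : IsRegularPt σ t₀) (hfix : t₀ = phi σ t₀) :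
    (q t₀)^[p] 0 = 0 ∧
    (∀ k, 1 ≤ k → k ≤ p - 1 → (q t₀)^[k] 0 ≠ 0) ∧
    (q t₀)^[1] 0 = t₀ ∧
    (∀ k, 2 ≤ k → k ≤ p - 1 →
      (q t₀)^[k] 0 = phi ((-(σ.getD (k - 1) 0)) :: σ.drop k) t₀ ∧
      Real.sign ((q t₀)^[k] 0) = -(σ.getD (k - 1) 0)) :=
  root_branch_fixed_point_gives_superstable_cycle_general p hp σ hσ hlen t₀ hreg hfix
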